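/- Let X be an F-adapted process and let Q be an extremal point of Q(X,F). Then: (a) the σ-algebra F_0 is Q-trivial, i.e. Q(A) ∈ {0,1} for every A ∈ F_0; and (b) every bounded (Q,F)-martingale N with N_0 = 0 Q-a.s. such that the product (N_t X_t)_{t∈[0,T]} is a (Q,F)-martingale satisfies N_t = 0 Q-a.s. for every t ∈ [0,T]. -/

import Mathlib

/-! If `Z` is bounded, `F T`-measurable and centred under `Q`, and `∫_B Z X_t = ∫_B Z X_s` for
`s ≤ t` and `B ∈ F s`, then for small `c > 0` the measures with densities `1 ± c Z` lie in
`ℚ(X, F)` and average to `Q`; extremality forces `(1 + c Z) Q = Q`, i.e. `Z = 0` a.s.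
For (a) take `Z = 1_A - Q(A)` with `A ∈ F 0`. For (b) take `Z = N T`: projecting `N T` onto
`F t` turns `∫_B N_T X_t` into `∫_B N_t X_t`, and `N X` is a martingale. -/

open MeasureTheory ProbabilityTheory Filter Set

noncomputable section

namespace PaperStmts

variable {Ω : Type*}

/-- The process `X` is adapted to the filtration `F` on the time interval `[0, T]`. -/
def AdaptedOn (F : ℝ → (MeasurableSpace Ω)) (X : ℝ → Ω → ℝ) (T : ℝ) : Prop :=
  ∀ t ∈ Set.Icc (0 : ℝ) T, Measurable[F t] (X t)

/-- The process `X` is a `(Q, F)`-martingale on `[0, T]`: every `X t` is `Q`-integrable and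
`E^Q[X t | F s] = X s` `Q`-a.s. for all `0 ≤ s ≤ t ≤ T`. -/
def IsMartingaleOn {mΩ : MeasurableSpace Ω} (Q : Measure Ω)
    (F : ℝ → MeasurableSpace Ω) (X : ℝ → Ω → ℝ) (T : ℝ) : Prop :=
  (∀ t ∈ Set.Icc (0 : ℝ) T, Integrable (X t) Q) ∧
    ∀ s t : ℝ, 0 ≤ s → s ≤ t → t ≤ T → (Q[X t | F s]) =ᵐ[Q] X s

/-- The set `ℙ(X, F)` of probability measures on `(Ω, F T)` equivalent to the restriction
of `P` to `F T` under which `X` is an `F`-martingale on `[0, T]`. -/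
def MartMeasures {m𝓕 : MeasurableSpace Ω} (P : Measure Ω)
    (F : ℝ → MeasurableSpace Ω) (T : ℝ) (hFT : F T ≤ m𝓕) (X : ℝ → Ω → ℝ) :
    Set (@Measure Ω (F T)) :=
  {Q | @IsProbabilityMeasure Ω (F T) Q ∧
    Q ≪ P.trim hFT ∧ P.trim hFT ≪ Q ∧ IsMartingaleOn Q F X T}

/-- The set `ℚ(X, F)` of all probability measures on `(Ω, F T)` under which `X` is an
`F`-martingale on `[0, T]`. -/
def QMeasures (F : ℝ → MeasurableSpace Ω) (T : ℝ) (X : ℝ → Ω → ℝ) :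
    Set (@Measure Ω (F T)) :=
  {Q | @IsProbabilityMeasure Ω (F T) Q ∧ IsMartingaleOn Q F X T}

/-- `Q` is an extremal point of `ℚ(X, F)`: it belongs to `ℚ(X, F)` and cannot be written as a
strictly convex combination of two elements of `ℚ(X, F)` other than trivially. -/
def IsExtremalIn (F : ℝ → MeasurableSpace Ω) (T : ℝ) (X : ℝ → Ω → ℝ)
    (Q : @Measure Ω (F T)) : Prop :=
  Q ∈ QMeasures F T X ∧
    ∀ (α : ℝ) (Q₁ Q₂ : @Measure Ω (F T)), 0 < α → α < 1 →
      Q₁ ∈ QMeasures F T X → Q₂ ∈ QMeasures F T X →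
      Q = ENNReal.ofReal α • Q₁ + ENNReal.ofReal (1 - α) • Q₂ →
      Q₁ = Q ∧ Q₂ = Q

/-- The trajectories of `X` are càdlàg on `[0, T]`: right-continuous on `[0, T)` and with
left limits on `(0, T]`. -/
def CadlagOn (X : ℝ → Ω → ℝ) (T : ℝ) : Prop :=
  ∀ ω : Ω,
    (∀ t ∈ Set.Ico (0 : ℝ) T, ContinuousWithinAt (fun s => X s ω) (Set.Ici t) t) ∧
    (∀ t ∈ Set.Ioc (0 : ℝ) T,
      ∃ l : ℝ, Tendsto (fun s => X s ω) (nhdsWithin t (Set.Iio t)) (nhds l))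

/-- `E^Q[sup_{t ∈ [0, T]} X_t ^ 2] < ∞`. -/
def SqSupIntegrable {mΩ : MeasurableSpace Ω} (Q : Measure Ω) (X : ℝ → Ω → ℝ) (T : ℝ) : Prop :=
  ∫⁻ ω, ⨆ t ∈ Set.Icc (0 : ℝ) T, ENNReal.ofReal (X t ω ^ 2) ∂Q < ⊤

/-- The family `{M t : t ∈ [0, T]}` is uniformly integrable under `Q`. -/
def UIFamilyOn {mΩ : MeasurableSpace Ω} (Q : Measure Ω) (M : ℝ → Ω → ℝ) (T : ℝ) : Prop :=
  ∀ ε : ℝ, 0 < ε → ∃ C : ℝ, 0 ≤ C ∧ ∀ t ∈ Set.Icc (0 : ℝ) T,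
    ∫⁻ ω in {ω | C ≤ |M t ω|}, ENNReal.ofReal |M t ω| ∂Q ≤ ENNReal.ofReal ε

/-- The natural filtration of the process `U`: `F^U_t = σ(U s : 0 ≤ s ≤ t)`. -/
def natFilt (U : ℝ → Ω → ℝ) (t : ℝ) : MeasurableSpace Ω :=
  ⨆ s ∈ Set.Icc (0 : ℝ) t, MeasurableSpace.comap (U s) Real.measurableSpace

section Measure

variable {m₀ : MeasurableSpace Ω}

lemma setIntegral_condExp_mul_of_stronglyMeasurable_right {m : MeasurableSpace Ω}
    {μ : Measure[m₀] Ω} [IsFiniteMeasure μ] (hm : m ≤ m₀) {f g : Ω → ℝ}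
    (hg : StronglyMeasurable[m] g) (hfg : Integrable (f * g) μ) (hf : Integrable f μ) {B : Set Ω}
    (hB : MeasurableSet[m] B) :
    ∫ ω in B, μ[f|m] ω * g ω ∂μ = ∫ ω in B, f ω * g ω ∂μ :=
  calc ∫ ω in B, μ[f|m] ω * g ω ∂μ = ∫ ω in B, μ[f * g|m] ω ∂μ :=
        setIntegral_congr_ae (hm B hB)
          ((condExp_mul_of_stronglyMeasurable_right hg hfg hf).mono fun _ h _ => h.symm)
    _ = ∫ ω in B, f ω * g ω ∂μ := setIntegral_condExp hm hfg hB

lemma setIntegral_withDensity_ofReal {μ : Measure Ω} {g : Ω → ℝ} (hg : Measurable g)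
    (hg₀ : ∀ ω, 0 ≤ g ω) (f : Ω → ℝ) {B : Set Ω} (hB : MeasurableSet B) :
    ∫ ω in B, f ω ∂μ.withDensity (fun ω => ENNReal.ofReal (g ω)) = ∫ ω in B, g ω * f ω ∂μ := by
  rw [setIntegral_withDensity_eq_setIntegral_toReal_smul hg.ennreal_ofReal
    (ae_of_all _ fun _ => ENNReal.ofReal_lt_top) f hB]
  simp only [ENNReal.toReal_ofReal (hg₀ _), smul_eq_mul]

lemma isProbabilityMeasure_withDensity_ofReal {μ : Measure Ω} {g : Ω → ℝ}
    (hg : Integrable g μ) (hg₀ : ∀ ω, 0 ≤ g ω) (hg₁ : ∫ ω, g ω ∂μ = 1) :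
    IsProbabilityMeasure (μ.withDensity fun ω => ENNReal.ofReal (g ω)) := by
  constructor
  rw [withDensity_apply _ MeasurableSet.univ, Measure.restrict_univ,
    ← ofReal_integral_eq_lintegral_ofReal hg (ae_of_all _ hg₀), hg₁, ENNReal.ofReal_one]

lemma half_withDensity_one_add_add_half_withDensity_one_sub {μ : Measure Ω} {h : Ω → ℝ}
    (hh : Measurable h) (hh₁ : ∀ ω, |h ω| ≤ 1) :
    ENNReal.ofReal (1 / 2) • μ.withDensity (fun ω => ENNReal.ofReal (1 + h ω))
      + ENNReal.ofReal (1 - 1 / 2) • μ.withDensity (fun ω => ENNReal.ofReal (1 - h ω)) = μ := by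
  rw [← withDensity_smul' _ _ ENNReal.ofReal_ne_top, ← withDensity_smul' _ _ ENNReal.ofReal_ne_top,
    ← withDensity_add_left (by fun_prop)]
  conv_rhs => rw [← withDensity_one (μ := μ)]
  congr 1
  funext ω
  obtain ⟨hlo, hhi⟩ := abs_le.1 (hh₁ ω)
  simp only [Pi.add_apply, Pi.smul_apply, smul_eq_mul, Pi.one_apply]
  rw [← ENNReal.ofReal_mul (by norm_num), ← ENNReal.ofReal_mul (by norm_num),
    ← ENNReal.ofReal_add (by linarith) (by linarith)]
  ring_nf
  exact ENNReal.ofReal_one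

end Measure

section Martingale

variable {F : ℝ → MeasurableSpace Ω} {T : ℝ} {X : ℝ → Ω → ℝ}

lemma IsMartingaleOn.setIntegral_eq (hF_mono : ∀ s t : ℝ, s ≤ t → F s ≤ F t)
    {Q : @Measure Ω (F T)} [@IsFiniteMeasure Ω (F T) Q] (hX : IsMartingaleOn Q F X T)
    {s t : ℝ} (hs : 0 ≤ s) (hst : s ≤ t) (htT : t ≤ T) {B : Set Ω}
    (hB : MeasurableSet[F s] B) :
    ∫ ω in B, X t ω ∂Q = ∫ ω in B, X s ω ∂Q := by
  have hsT := hF_mono s T (hst.trans htT)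
  rw [← setIntegral_condExp hsT (hX.1 t ⟨hs.trans hst, htT⟩) hB]
  exact setIntegral_congr_ae (hsT B hB) ((hX.2 s t hs hst htT).mono fun _ h _ => h)

lemma IsMartingaleOn.setIntegral_mul_eq (hF_mono : ∀ s t : ℝ, s ≤ t → F s ≤ F t)
    {Q : @Measure Ω (F T)} [@IsFiniteMeasure Ω (F T) Q] {N : ℝ → Ω → ℝ}
    (hN : IsMartingaleOn Q F N T) {s t : ℝ} (hs : 0 ≤ s) (hst : s ≤ t) (htT : t ≤ T)
    {Y : Ω → ℝ} (hY : StronglyMeasurable[F s] Y) (hNY : Integrable (fun ω => N t ω * Y ω) Q)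
    {B : Set Ω} (hB : MeasurableSet[F s] B) :
    ∫ ω in B, N t ω * Y ω ∂Q = ∫ ω in B, N s ω * Y ω ∂Q := by
  have hsT := hF_mono s T (hst.trans htT)
  rw [← setIntegral_condExp_mul_of_stronglyMeasurable_right hsT hY hNY
    (hN.1 t ⟨hs.trans hst, htT⟩) hB]
  exact setIntegral_congr_ae (hsT B hB)
    ((hN.2 s t hs hst htT).mono fun _ h _ => by rw [h])

lemma isMartingaleOn_of_forall_setIntegral_eq (hF_mono : ∀ s t : ℝ, s ≤ t → F s ≤ F t)
    (hX : AdaptedOn F X T) {Q : @Measure Ω (F T)} [@IsFiniteMeasure Ω (F T) Q]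
    (hint : ∀ t ∈ Set.Icc (0 : ℝ) T, Integrable (X t) Q)
    (heq : ∀ s t : ℝ, 0 ≤ s → s ≤ t → t ≤ T → ∀ B : Set Ω, MeasurableSet[F s] B →
      ∫ ω in B, X t ω ∂Q = ∫ ω in B, X s ω ∂Q) :
    IsMartingaleOn Q F X T := by
  refine ⟨hint, fun s t hs hst htT => ?_⟩
  have hsT := hF_mono s T (hst.trans htT)
  have := isFiniteMeasure_trim (μ := Q) hsT
  exact (ae_eq_condExp_of_forall_setIntegral_eq hsT (hint t ⟨hs.trans hst, htT⟩)
    (fun B _ _ => (hint s ⟨hs, hst.trans htT⟩).integrableOn)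
    (fun B hB _ => (heq s t hs hst htT B hB).symm)
    (hX s ⟨hs, hst.trans htT⟩).stronglyMeasurable.aestronglyMeasurable).symm

lemma withDensity_mem_QMeasures (hF_mono : ∀ s t : ℝ, s ≤ t → F s ≤ F t)
    (hX : AdaptedOn F X T) {Q : @Measure Ω (F T)} (hQ : Q ∈ QMeasures F T X) {g : Ω → ℝ}
    (hg : Measurable[F T] g) (hg₀ : ∀ ω, 0 ≤ g ω) {K : ℝ} (hgK : ∀ ω, g ω ≤ K)
    (hg₁ : ∫ ω, g ω ∂Q = 1)
    (hgX : ∀ s t : ℝ, 0 ≤ s → s ≤ t → t ≤ T → ∀ B : Set Ω, MeasurableSet[F s] B →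
      ∫ ω in B, g ω * X t ω ∂Q = ∫ ω in B, g ω * X s ω ∂Q) :
    Q.withDensity (fun ω => ENNReal.ofReal (g ω)) ∈ QMeasures F T X := by
  have := hQ.1
  have hg_int : Integrable g Q := Integrable.of_bound hg.aestronglyMeasurable K
    (ae_of_all _ fun ω => by rw [Real.norm_of_nonneg (hg₀ ω)]; exact hgK ω)
  have hP := isProbabilityMeasure_withDensity_ofReal hg_int hg₀ hg₁
  have hle : Q.withDensity (fun ω => ENNReal.ofReal (g ω)) ≤ ENNReal.ofReal K • Q := by
    rw [← withDensity_const]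
    exact withDensity_mono (ae_of_all _ fun ω => ENNReal.ofReal_le_ofReal (hgK ω))
  refine ⟨hP, isMartingaleOn_of_forall_setIntegral_eq hF_mono hX
    (fun t ht => ((hQ.2.1 t ht).smul_measure ENNReal.ofReal_ne_top).mono_measure hle) ?_⟩
  intro s t hs hst htT B hB
  have hBT := hF_mono s T (hst.trans htT) B hB
  rw [setIntegral_withDensity_ofReal hg hg₀ _ hBT, setIntegral_withDensity_ofReal hg hg₀ _ hBT]
  exact hgX s t hs hst htT B hB

lemma withDensity_one_add_mul_mem_QMeasures (hF_mono : ∀ s t : ℝ, s ≤ t → F s ≤ F t)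
    (hX : AdaptedOn F X T) {Q : @Measure Ω (F T)} (hQ : Q ∈ QMeasures F T X) {Z : Ω → ℝ}
    (hZ : Measurable[F T] Z) {C : ℝ} (hZC : ∀ ω, |Z ω| ≤ C) (hZ₀ : ∫ ω, Z ω ∂Q = 0)
    (hZX : ∀ s t : ℝ, 0 ≤ s → s ≤ t → t ≤ T → ∀ B : Set Ω, MeasurableSet[F s] B →
      ∫ ω in B, Z ω * X t ω ∂Q = ∫ ω in B, Z ω * X s ω ∂Q)
    (ε : ℝ) (hε : ∀ ω, |ε * Z ω| ≤ 1) :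
    Q.withDensity (fun ω => ENNReal.ofReal (1 + ε * Z ω)) ∈ QMeasures F T X := by
  have := hQ.1
  have hZ_int : Integrable Z Q := Integrable.of_bound hZ.aestronglyMeasurable C
    (ae_of_all _ fun ω => (Real.norm_eq_abs _).trans_le (hZC ω))
  have hZX_int : ∀ u ∈ Set.Icc (0 : ℝ) T, Integrable (fun ω => Z ω * X u ω) Q :=
    fun u hu => (hQ.2.1 u hu).bdd_mul hZ.aestronglyMeasurable
      (ae_of_all _ fun ω => (Real.norm_eq_abs _).trans_le (hZC ω))
  refine withDensity_mem_QMeasures hF_mono hX hQ (K := 2) (by fun_prop)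
    (fun ω => by linarith [(abs_le.1 (hε ω)).1]) (fun ω => by linarith [(abs_le.1 (hε ω)).2])
    ?_ ?_
  · rw [integral_add (integrable_const _) (hZ_int.const_mul ε), integral_const_mul, hZ₀]
    simp
  · intro s t hs hst htT B hB
    have hsT : s ∈ Set.Icc (0 : ℝ) T := ⟨hs, hst.trans htT⟩
    have htT' : t ∈ Set.Icc (0 : ℝ) T := ⟨hs.trans hst, htT⟩
    simp only [add_mul, one_mul, mul_assoc]
    rw [integral_add (hQ.2.1 t htT').integrableOn ((hZX_int t htT').const_mul ε).integrableOn,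
      integral_add (hQ.2.1 s hsT).integrableOn ((hZX_int s hsT).const_mul ε).integrableOn,
      integral_const_mul, integral_const_mul, hQ.2.setIntegral_eq hF_mono hs hst htT hB,
      hZX s t hs hst htT B hB]

lemma IsExtremalIn.ae_eq_zero_of_perturbation (hF_mono : ∀ s t : ℝ, s ≤ t → F s ≤ F t)
    (hX : AdaptedOn F X T) {Q : @Measure Ω (F T)} (hQ : IsExtremalIn F T X Q) {Z : Ω → ℝ}
    (hZ : Measurable[F T] Z) {C : ℝ} (hZC : ∀ ω, |Z ω| ≤ C) (hZ₀ : ∫ ω, Z ω ∂Q = 0)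
    (hZX : ∀ s t : ℝ, 0 ≤ s → s ≤ t → t ≤ T → ∀ B : Set Ω, MeasurableSet[F s] B →
      ∫ ω in B, Z ω * X t ω ∂Q = ∫ ω in B, Z ω * X s ω ∂Q) :
    Z =ᵐ[Q] 0 := by
  obtain ⟨hQmem, hQext⟩ := hQ
  have := hQmem.1
  set c : ℝ := (|C| + 1)⁻¹
  have hc : 0 < c := by positivity
  have hcZ : ∀ ω, |c * Z ω| ≤ 1 := fun ω => by
    rw [abs_mul, abs_of_pos hc]
    calc c * |Z ω| ≤ c * (|C| + 1) := by gcongr; linarith [hZC ω, le_abs_self C]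
      _ = 1 := inv_mul_cancel₀ (by positivity)
  have hmem := withDensity_one_add_mul_mem_QMeasures hF_mono hX hQmem hZ hZC hZ₀ hZX
  have hmem_neg := hmem (-c) fun ω => by simpa [neg_mul, abs_neg] using hcZ ω
  simp only [neg_mul, ← sub_eq_add_neg] at hmem_neg
  have hQ_pos := (hQext (1 / 2) _ _ (by norm_num) (by norm_num) (hmem c hcZ) hmem_neg
    (half_withDensity_one_add_add_half_withDensity_one_sub (hZ.const_mul c) hcZ).symm).1
  have hdens : (fun ω => ENNReal.ofReal (1 + c * Z ω)) =ᵐ[Q] 1 :=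
    (withDensity_eq_iff_of_sigmaFinite (by fun_prop) aemeasurable_const).1
      (hQ_pos.trans withDensity_one.symm)
  filter_upwards [hdens] with ω hω
  simpa [hc.ne'] using ENNReal.ofReal_eq_one.1 hω

lemma IsExtremalIn.measure_eq_zero_or_one (hF_mono : ∀ s t : ℝ, s ≤ t → F s ≤ F t)
    (hT : 0 ≤ T) (hX : AdaptedOn F X T) {Q : @Measure Ω (F T)} (hQ : IsExtremalIn F T X Q)
    {A : Set Ω} (hA : MeasurableSet[F 0] A) :
    Q A = 0 ∨ Q A = 1 := by
  have := hQ.1.1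
  have hAT : MeasurableSet[F T] A := hF_mono 0 T hT A hA
  set p := Q.real A
  have hZX_split : ∀ u ∈ Set.Icc (0 : ℝ) T, ∀ B : Set Ω, MeasurableSet[F T] B →
      ∫ ω in B, (A.indicator 1 ω - p) * X u ω ∂Q
        = ∫ ω in B ∩ A, X u ω ∂Q - p * ∫ ω in B, X u ω ∂Q := by
    intro u hu B hB
    have hXu := hQ.1.2.1 u hu
    simp only [sub_mul, Pi.one_apply, ← Set.indicator_mul_left, one_mul]
    rw [integral_sub (hXu.indicator hAT).integrableOn (hXu.const_mul p).integrableOn,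
      setIntegral_indicator hAT, integral_const_mul]
  have hp : p ∈ Set.Icc (0 : ℝ) 1 := ⟨measureReal_nonneg, measureReal_le_one⟩
  have h1A : Integrable (A.indicator (1 : Ω → ℝ)) Q := (integrable_const (1 : ℝ)).indicator hAT
  have hZ : (fun ω => A.indicator 1 ω - p) =ᵐ[Q] 0 := by
    refine hQ.ae_eq_zero_of_perturbation hF_mono hX (C := 1)
      ((measurable_const.indicator hAT).sub measurable_const) (fun ω => ?_) ?_
      (fun s u hs hsu huT B hB => ?_)
    · by_cases hω : ω ∈ A <;> simp [hω, abs_le] <;> constructor <;> linarith [hp.1, hp.2]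
    · rw [integral_sub h1A (integrable_const p), integral_indicator_one hAT]
      simp [p]
    · have hBA : MeasurableSet[F s] (B ∩ A) := hB.inter (hF_mono 0 s hs A hA)
      have hBT := hF_mono s T (hsu.trans huT) B hB
      rw [hZX_split u ⟨hs.trans hsu, huT⟩ B hBT, hZX_split s ⟨hs, hsu.trans huT⟩ B hBT,
        hQ.1.2.setIntegral_eq hF_mono hs hsu huT hB, hQ.1.2.setIntegral_eq hF_mono hs hsu huT hBA]
  have hpp : p - p * p = 0 := by
    have h := integral_congr_ae (ae_restrict_of_ae (μ := Q) (s := A) hZ)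
    rw [integral_sub h1A.integrableOn (integrable_const p).integrableOn,
      setIntegral_indicator hAT, Set.inter_self] at h
    simpa [p] using h
  rcases mul_eq_zero.1 (show p * (1 - p) = 0 by linarith) with h | h
  · exact Or.inl ((measureReal_eq_zero_iff (measure_ne_top Q A)).1 h)
  · exact Or.inr ((ENNReal.toReal_eq_one_iff _).1 (by linarith : p = 1))

lemma IsExtremalIn.ae_eq_zero_of_isMartingaleOn_mul (hF_mono : ∀ s t : ℝ, s ≤ t → F s ≤ F t)
    (hT : 0 ≤ T) (hX : AdaptedOn F X T) {Q : @Measure Ω (F T)} (hQ : IsExtremalIn F T X Q)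
    {N : ℝ → Ω → ℝ} (hN : AdaptedOn F N T) {C : ℝ} (hC : ∀ t ∈ Set.Icc (0 : ℝ) T, ∀ ω, |N t ω| ≤ C)
    (hN_mart : IsMartingaleOn Q F N T) (hN₀ : N 0 =ᵐ[Q] 0)
    (hNX : IsMartingaleOn Q F (fun t ω => N t ω * X t ω) T) {t : ℝ} (ht : t ∈ Set.Icc (0 : ℝ) T) :
    N t =ᵐ[Q] 0 := by
  have := hQ.1.1
  have hTT : T ∈ Set.Icc (0 : ℝ) T := ⟨hT, le_rfl⟩
  have hNT_mul : ∀ s ∈ Set.Icc (0 : ℝ) T, ∀ B : Set Ω, MeasurableSet[F s] B →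
      ∫ ω in B, N T ω * X s ω ∂Q = ∫ ω in B, N s ω * X s ω ∂Q := fun s hs B hB =>
    hN_mart.setIntegral_mul_eq hF_mono hs.1 hs.2 le_rfl (hX s hs).stronglyMeasurable
      ((hQ.1.2.1 s hs).bdd_mul (hN T hTT).aestronglyMeasurable
        (ae_of_all _ fun ω => (Real.norm_eq_abs _).trans_le (hC T hTT ω))) hB
  have hNT : N T =ᵐ[Q] 0 := by
    refine hQ.ae_eq_zero_of_perturbation hF_mono hX (hN T hTT) (hC T hTT) ?_ ?_
    · rw [← setIntegral_univ, hN_mart.setIntegral_eq hF_mono le_rfl hT le_rfl MeasurableSet.univ,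
        setIntegral_univ, integral_congr_ae hN₀]
      simp
    · intro s u hs hsu huT B hB
      calc ∫ ω in B, N T ω * X u ω ∂Q = ∫ ω in B, N u ω * X u ω ∂Q :=
            hNT_mul u ⟨hs.trans hsu, huT⟩ B (hF_mono s u hsu B hB)
        _ = ∫ ω in B, N s ω * X s ω ∂Q := hNX.setIntegral_eq hF_mono hs hsu huT hB
        _ = ∫ ω in B, N T ω * X s ω ∂Q := (hNT_mul s ⟨hs, hsu.trans huT⟩ B hB).symm
  calc N t =ᵐ[Q] Q[N T|F t] := (hN_mart.2 t T ht.1 ht.2 le_rfl).symm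
    _ =ᵐ[Q] Q[0|F t] := condExp_congr_ae hNT
    _ = 0 := condExp_zero

end Martingale

theorem statement_11_general {Ω : Type*}
    (T : ℝ) (hT : 0 < T)
    (F : ℝ → MeasurableSpace Ω)
    (hF_mono : ∀ s t : ℝ, s ≤ t → F s ≤ F t)
    (X : ℝ → Ω → ℝ)
    (hX_adapted : AdaptedOn F X T)
    (Q : @Measure Ω (F T))
    (hQ_ext : IsExtremalIn F T X Q) :
    (∀ A : Set Ω, MeasurableSet[F 0] A → Q A = 0 ∨ Q A = 1) ∧
    (∀ N : ℝ → Ω → ℝ,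
      AdaptedOn F N T →
      (∃ C : ℝ, ∀ t ∈ Set.Icc (0 : ℝ) T, ∀ ω, |N t ω| ≤ C) →
      IsMartingaleOn Q F N T →
      N 0 =ᵐ[Q] 0 →
      IsMartingaleOn Q F (fun t ω => N t ω * X t ω) T →
      ∀ t ∈ Set.Icc (0 : ℝ) T, N t =ᵐ[Q] 0) :=
  ⟨fun _ hA => hQ_ext.measure_eq_zero_or_one hF_mono hT.le hX_adapted hA,
    fun _ hN ⟨_, hC⟩ hN_mart hN₀ hNX _ ht =>
      hQ_ext.ae_eq_zero_of_isMartingaleOn_mul hF_mono hT.le hX_adapted hN hC hN_mart hN₀ hNX ht⟩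

/-- (direction a) ⇒ b) of Theorem 5.1 of the paper, Jacod's extremality
theorem). If `Q` is an extremal point of `ℚ(X, F)`, then (a) `F 0` is `Q`-trivial, and
(b) every bounded `(Q, F)`-martingale `N` with `N 0 = 0` `Q`-a.s. such that `N X` is a
`(Q, F)`-martingale vanishes: `N t = 0` `Q`-a.s. for every `t ∈ [0, T]`. -/
theorem statement_11 {Ω : Type*} {m𝓕 : MeasurableSpace Ω}
    (T : ℝ) (hT : 0 < T)
    (F : ℝ → MeasurableSpace Ω)
    (hF_mono : ∀ s t : ℝ, s ≤ t → F s ≤ F t) (hF_le : ∀ t : ℝ, F t ≤ m𝓕)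
    (X : ℝ → Ω → ℝ)
    (hX_adapted : AdaptedOn F X T)
    (Q : @Measure Ω (F T))
    (hQ_ext : IsExtremalIn F T X Q) :
    (∀ A : Set Ω, MeasurableSet[F 0] A → Q A = 0 ∨ Q A = 1) ∧
    (∀ N : ℝ → Ω → ℝ,
      AdaptedOn F N T →
      (∃ C : ℝ, ∀ t ∈ Set.Icc (0 : ℝ) T, ∀ ω, |N t ω| ≤ C) →
      IsMartingaleOn Q F N T →
      N 0 =ᵐ[Q] 0 →
      IsMartingaleOn Q F (fun t ω => N t ω * X t ω) T →
      ∀ t ∈ Set.Icc (0 : ℝ) T, N t =ᵐ[Q] 0) :=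
  statement_11_general T hT F hF_mono X hX_adapted Q hQ_ext

end PaperStmts
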